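/- Let Γ be a weighted graph. The map α ↦ (α(e), v ↦ σ(α,v)) is a bijection between the automorphism group A_Γ of the Cayley graph C_Γ and the set W_Γ × Σ_Γ; consequently the stabiliser of the identity vertex e in A_Γ is in bijection with the set Σ_Γ of legal configurations of local actions. -/

import Mathlib

/-!
Setup for Cayley graphs of Coxeter groups.

A weighted graph `Γ = (VΓ, EΓ, m)` in the sense of the paper is encoded by a Mathlib
`CoxeterMatrix B` (`B = VΓ`): the weight `m x y` is `M x y`, where the entry `0` encodes `∞`
(no relation / no edge).  The associated Coxeter group is `M.Group`, with standard generators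
`M.simple x`.
-/

open CoxeterMatrix

variable {B : Type*}

/-- The automorphism group of a simple graph, as a subgroup of the permutation group
of its vertex set. -/
def graphAut {V : Type*} (G : SimpleGraph V) : Subgroup (Equiv.Perm V) where
  carrier := {σ | ∀ x y : V, G.Adj (σ x) (σ y) ↔ G.Adj x y}
  one_mem' := by intro x y; simp
  mul_mem' := by
    intro a b ha hb x y
    simpa [Equiv.Perm.mul_apply] using (ha (b x) (b y)).trans (hb x y)
  inv_mem' := by
    intro a ha x y
    simpa using (ha (a⁻¹ x) (a⁻¹ y)).symm

/-- The group `Aut(Γ)` of weight-preserving automorphisms of the weighted graph encoded by the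
Coxeter matrix `M`, as a subgroup of the permutation group of the vertex set. -/
def wAut (M : CoxeterMatrix B) : Subgroup (Equiv.Perm B) where
  carrier := {σ | ∀ x y : B, M (σ x) (σ y) = M x y}
  one_mem' := by intro x y; simp
  mul_mem' := by
    intro a b ha hb x y
    simpa [Equiv.Perm.mul_apply] using (ha (b x) (b y)).trans (hb x y)
  inv_mem' := by
    intro a ha x y
    simpa using (ha (a⁻¹ x) (a⁻¹ y)).symm

/-- The simplicial graph underlying a weighted graph (Coxeter matrix): distinct vertices `x, y`
are adjacent iff the weight `M x y` is finite (recall that the entry `0` encodes `∞`). -/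
def cGraph (M : CoxeterMatrix B) : SimpleGraph B where
  Adj x y := x ≠ y ∧ M x y ≠ 0
  symm := ⟨by
    rintro x y ⟨h1, h2⟩
    exact ⟨h1.symm, by rwa [M.symmetric y x]⟩⟩
  loopless := ⟨fun x h => h.1 rfl⟩

/-- The star of a vertex `x`: the vertex together with all its neighbours. -/
def starSet (M : CoxeterMatrix B) (x : B) : Set B := insert x ((cGraph M).neighborSet x)

/-- The Cayley graph `C_Γ` of the Coxeter group `W_Γ = M.Group` with respect to the standard
generating set: `v` and `w` are adjacent iff `w = v * (M.simple x)` for some generator `x`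
(the edge `{v, v * M.simple x}` is labelled by `x`). -/
def cayley (M : CoxeterMatrix B) : SimpleGraph M.Group where
  Adj v w := v ≠ w ∧ ∃ x : B, w = v * M.simple x
  symm := ⟨by
    rintro v w ⟨hne, x, rfl⟩
    refine ⟨hne.symm, x, ?_⟩
    have h : M.simple x * M.simple x = 1 := M.toCoxeterSystem.simple_mul_simple_self x
    rw [mul_assoc, h, mul_one]⟩
  loopless := ⟨fun v h => h.1 rfl⟩

/-- `τ : VΓ → VΓ` is the local action `σ(α, v)` of the (Cayley graph automorphism) `α` at the
vertex `v`: for each generator `x`, `α` maps the edge `{v, v·x}` (labelled `x`) to the edge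
`{α v, (α v)·(τ x)}` (labelled `τ x`). -/
def IsLocalAction (M : CoxeterMatrix B) (α : Equiv.Perm M.Group) (v : M.Group)
    (τ : B → B) : Prop :=
  ∀ x : B, α (v * M.simple x) = α v * M.simple (τ x)

/-- `Γ₁` is a factor associated with the separating set `S ⊊ VΓ`: the induced subgraph on
`VΓ ∖ S` is disconnected, and `Γ₁` is the union of `S` with a nonempty collection `C` of
connected components of `VΓ ∖ S` which omits at least one component (so `C` is a nonempty
union of components, closed under reachability, with nonempty complement in `VΓ ∖ S`). -/
def IsFactor (M : CoxeterMatrix B) (S : Set B) (Γ₁ : Set B) : Prop :=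
  S ≠ Set.univ ∧ ¬ ((cGraph M).induce Sᶜ).Connected ∧
  ∃ C : Set B, Γ₁ = S ∪ C ∧ C ⊆ Sᶜ ∧ C.Nonempty ∧ (Sᶜ \ C).Nonempty ∧
    (∀ x y : ↥(Sᶜ), ((cGraph M).induce Sᶜ).Reachable x y → (x : B) ∈ C → (y : B) ∈ C)

/-- `S` is a good separating set: some factor `Γ₁` associated with `S` carries a nontrivial
weight-preserving automorphism restricting to the identity on `S`. -/
def IsGoodSepSet (M : CoxeterMatrix B) (S : Set B) : Prop :=
  ∃ Γ₁ : Set B, IsFactor M S Γ₁ ∧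
    ∃ σ : Equiv.Perm ↥Γ₁, σ ≠ 1 ∧ (∀ a b : ↥Γ₁, M ((σ a : B)) ((σ b : B)) = M (a : B) (b : B)) ∧
      (∀ a : ↥Γ₁, (a : B) ∈ S → σ a = a)

/-- The permutation topology on a group of permutations of `V` (e.g. the automorphism group of a
graph with vertex set `V`): the topology of pointwise convergence, i.e. the topology induced from
the product topology on `V → V` where each factor carries the discrete topology.  Its basic open
neighbourhoods of the identity are the pointwise stabilisers of finite subsets of `V`. -/
def permTop {V : Type*} (H : Subgroup (Equiv.Perm V)) : TopologicalSpace ↥H :=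
  TopologicalSpace.induced (fun α => ((α : Equiv.Perm V) : V → V))
    (@Pi.topologicalSpace V (fun _ => V) (fun _ => ⊥))

open Classical in
/-- The weighted graph (Coxeter matrix) of a right-angled weighted graph: all edges of the
simplicial graph `G` get weight `2`. -/
noncomputable def ofGraph {V : Type*} (G : SimpleGraph V) : CoxeterMatrix V where
  M := Matrix.of fun x y => if x = y then 1 else if G.Adj x y then 2 else 0
  isSymm := by
    ext x y
    by_cases h : x = y
    · simp [Matrix.IsSymm, h]
    · simp only [Matrix.transpose_apply, Matrix.of_apply, if_neg h, if_neg (Ne.symm h)]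
      rw [G.adj_comm]
  diagonal i := by simp
  off_diagonal i j h := by
    simp only [Matrix.of_apply, if_neg h]
    split_ifs <;> simp

open Classical in
/-- The local action `σ(α, v)` of `α` at `v`, as a function `VΓ → VΓ`: `localAct M α v x` is
the label of the edge `{α v, α (v * M.simple x)}`. -/
noncomputable def localAct {B : Type*} (M : CoxeterMatrix B) (α : Equiv.Perm M.Group)
    (v : M.Group) (x : B) : B :=
  if h : ∃ y : B, α (v * M.simple x) = α v * M.simple y then h.choose else x

/-- Legal configurations of local actions, as plain functions `W_Γ → (VΓ → VΓ)`. -/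
def legalFunConfigs {B : Type*} (M : CoxeterMatrix B) : Set (M.Group → B → B) :=
  {σb | ∃ α ∈ graphAut (cayley M), ∀ v : M.Group, IsLocalAction M α v (σb v)}

/-!
An automorphism `α` of the Cayley graph is determined by `α 1` and its local actions: writing
`w = v s_x`, the local action at `v` tells where `α` sends `w` once `α v` is known. Conversely,
composing `α` with the left translation by `w (α 1)⁻¹` moves `α 1` to any prescribed `w` without
changing the local actions. Both directions need that the label of an edge is well defined, i.e.
that distinct generators give distinct simple reflections. This comes from the Tits
representation on `B →₀ ℂ`: `s_x` acts by `v ↦ v - ⟨e_x, v⟩ e_x` with `⟨e_x, e_y⟩ = -2 cos (π/m)`;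
the relation `(s_x s_y)^m = 1` holds because `T = s_x s_y` has the eigenvalues `exp (±2πi/m)` on
the plane spanned by `e_x, e_y`, so `∑_{k<m} T^k` kills that plane, while `T - 1` maps everything
into it.
-/

open Finset

namespace Module.End

section CommSemiring

variable {R V : Type*} [CommSemiring R] [AddCommMonoid V] [Module R V] (T : Module.End R V)

lemma pow_apply_of_apply_eq_smul {a : R} {u : V} (h : T u = a • u) (k : ℕ) :
    (T ^ k) u = a ^ k • u := by
  induction k with
  | zero => simp
  | succ k ih => rw [pow_succ', mul_apply, ih, map_smul, h, smul_smul, pow_succ]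

lemma geom_sum_apply_of_apply_eq_smul {a : R} {u : V} (h : T u = a • u) (n : ℕ) :
    (∑ k ∈ range n, T ^ k) u = (∑ k ∈ range n, a ^ k) • u := by
  simp [LinearMap.sum_apply, Finset.sum_smul, T.pow_apply_of_apply_eq_smul h]

end CommSemiring

lemma apply_apply_sub_trace_add_det {R V : Type*} [CommRing R] [AddCommGroup V] [Module R V]
    (T : Module.End R V) {u w : V} {p q r s : R}
    (hu : T u = p • u + q • w) (hw : T w = r • u + s • w) :
    T (T u) - (p + s) • T u + (p * s - q * r) • u = 0 := by
  rw [hu, map_add, map_smul, map_smul, hu, hw]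
  module

lemma geom_sum_apply_eq_zero_of_quadratic {K V : Type*} [Field K] [AddCommGroup V]
    [Module K V] (T : Module.End K V) {a b : K} (hab : a ≠ b) {n : ℕ}
    (ha : ∑ k ∈ range n, a ^ k = 0) (hb : ∑ k ∈ range n, b ^ k = 0) {u : V}
    (hu : T (T u) - (a + b) • T u + (a * b) • u = 0) : (∑ k ∈ range n, T ^ k) u = 0 := by
  have hua : T (T u - b • u) = a • (T u - b • u) := by
    rw [map_sub, map_smul]; linear_combination (norm := module) hu
  have hub : T (T u - a • u) = b • (T u - a • u) := by
    rw [map_sub, map_smul]; linear_combination (norm := module) hu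
  have hsplit : (a - b) • u = (T u - b • u) - (T u - a • u) := by module
  have : (a - b) • (∑ k ∈ range n, T ^ k) u = 0 := by
    rw [← map_smul, hsplit, map_sub, T.geom_sum_apply_of_apply_eq_smul hua,
      T.geom_sum_apply_of_apply_eq_smul hub, ha, hb, zero_smul, zero_smul, sub_zero]
  exact (smul_eq_zero.mp this).resolve_left (sub_ne_zero.mpr hab)

end Module.End

namespace CoxeterMatrix

variable (M : CoxeterMatrix B)

/-- `-2 cos (π / M x y)`; the entry `0` (`m = ∞`) gives the standard value `-2`. -/
noncomputable def titsCoeff (x y : B) : ℂ :=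
  -(Complex.exp (Real.pi * Complex.I / M x y) + (Complex.exp (Real.pi * Complex.I / M x y))⁻¹)

lemma titsCoeff_comm (x y : B) : M.titsCoeff x y = M.titsCoeff y x := by
  rw [titsCoeff, titsCoeff, M.symmetric x y]

lemma titsCoeff_self (x : B) : M.titsCoeff x x = 2 := by
  rw [titsCoeff, M.diagonal x, Nat.cast_one, div_one, Complex.exp_pi_mul_I]
  norm_num

noncomputable def titsRefl (x : B) : Module.End ℂ (B →₀ ℂ) :=
  LinearMap.id - (Finsupp.linearCombination ℂ (M.titsCoeff x)).smulRight (Finsupp.single x 1)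

lemma titsRefl_apply (x : B) (v : B →₀ ℂ) :
    M.titsRefl x v =
      v - Finsupp.linearCombination ℂ (M.titsCoeff x) v • Finsupp.single x 1 := rfl

lemma titsRefl_single (x z : B) :
    M.titsRefl x (Finsupp.single z 1) =
      Finsupp.single z 1 - M.titsCoeff x z • Finsupp.single x 1 := by
  simp [titsRefl_apply]

lemma titsRefl_mul_self (x : B) : M.titsRefl x * M.titsRefl x = 1 := by
  refine LinearMap.ext fun v => ?_
  simp only [Module.End.mul_apply, Module.End.one_apply, titsRefl_apply M x, map_sub, map_smul,
    Finsupp.linearCombination_single, titsCoeff_self, smul_eq_mul]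
  module

lemma titsRefl_mul_titsRefl_apply_sub (x y : B) (v : B →₀ ℂ) :
    ∃ a b : ℂ, (M.titsRefl x * M.titsRefl y) v - v =
      a • Finsupp.single x 1 + b • Finsupp.single y 1 := by
  refine ⟨-Finsupp.linearCombination ℂ (M.titsCoeff x) (M.titsRefl y v),
    -Finsupp.linearCombination ℂ (M.titsCoeff y) v, ?_⟩
  rw [Module.End.mul_apply, titsRefl_apply M x, titsRefl_apply M y]
  module

lemma geom_sum_titsRefl_mul_titsRefl_apply_single {x y : B} (hxy : x ≠ y) (h0 : M x y ≠ 0) :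
    (∑ k ∈ range (M x y), (M.titsRefl x * M.titsRefl y) ^ k) (Finsupp.single x 1) = 0 ∧
    (∑ k ∈ range (M x y), (M.titsRefl x * M.titsRefl y) ^ k) (Finsupp.single y 1) = 0 := by
  set T := M.titsRefl x * M.titsRefl y
  set c := M.titsCoeff x y with hc
  have hTx : T (Finsupp.single x 1) =
      (c ^ 2 - 1) • Finsupp.single x 1 + (-c) • Finsupp.single y 1 := by
    simp only [T, Module.End.mul_apply, titsRefl_single, map_sub, map_smul, titsCoeff_self,
      M.titsCoeff_comm y x, ← hc]
    module
  have hTy : T (Finsupp.single y 1) = c • Finsupp.single x 1 + (-1 : ℂ) • Finsupp.single y 1 := by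
    simp only [T, Module.End.mul_apply, titsRefl_single, map_sub, map_smul, titsCoeff_self, ← hc]
    module
  have hm : 2 ≤ M x y := by have := M.off_diagonal x y hxy; omega
  rcases hm.eq_or_lt with hm2 | hm3
  · have hc0 : c = 0 := by
      rw [hc, titsCoeff, ← hm2, Nat.cast_ofNat,
        show (Real.pi : ℂ) * Complex.I / 2 = Real.pi / 2 * Complex.I by ring,
        Complex.exp_pi_div_two_mul_I, Complex.inv_I, add_neg_cancel, neg_zero]
    have hsum : ∑ k ∈ range (M x y), (-1 : ℂ) ^ k = 0 := by simp [← hm2]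
    constructor
    · rw [T.geom_sum_apply_of_apply_eq_smul (a := -1) (by rw [hTx, hc0]; module), hsum, zero_smul]
    · rw [T.geom_sum_apply_of_apply_eq_smul (a := -1) (by rw [hTy, hc0]; module), hsum, zero_smul]
  · set ζ := Complex.exp (Real.pi * Complex.I / M x y) with hζ
    have hζ0 : ζ ≠ 0 := Complex.exp_ne_zero _
    have hω : IsPrimitiveRoot (ζ ^ 2) (M x y) := by
      convert Complex.isPrimitiveRoot_exp (M x y) h0 using 1
      rw [hζ, ← Complex.exp_nat_mul]
      ring_nf
    have hne : ζ ^ 2 ≠ (ζ ^ 2)⁻¹ := fun h =>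
      hω.pow_ne_one_of_pos_of_lt two_ne_zero hm3 
        (by rw [sq]; nth_rw 2 [h]; exact mul_inv_cancel₀ (pow_ne_zero 2 hζ0))
    have htrace : c ^ 2 - 2 = ζ ^ 2 + (ζ ^ 2)⁻¹ := by
      rw [hc, titsCoeff, ← hζ]
      field_simp
      ring
    have hannihilate : ∀ (u w : B →₀ ℂ) (p q r s : ℂ), T u = p • u + q • w →
        T w = r • u + s • w → p + s = c ^ 2 - 2 → p * s - q * r = 1 →
        (∑ k ∈ range (M x y), T ^ k) u = 0 := by
      intro u w p q r s hu hw htr hdet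
      refine T.geom_sum_apply_eq_zero_of_quadratic hne (hω.geom_sum_eq_zero (by omega))
        (hω.inv.geom_sum_eq_zero (by omega)) ?_
      rw [← htrace, ← htr, mul_inv_cancel₀ (pow_ne_zero 2 hζ0), ← hdet]
      exact T.apply_apply_sub_trace_add_det hu hw
    exact ⟨hannihilate _ _ _ _ _ _ hTx hTy (by ring) (by ring),
      hannihilate _ _ _ _ _ _ (hTy.trans (add_comm _ _)) (hTx.trans (add_comm _ _)) (by ring)
        (by ring)⟩

lemma titsRefl_mul_titsRefl_pow (x y : B) : (M.titsRefl x * M.titsRefl y) ^ M x y = 1 := by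
  obtain rfl | hxy := eq_or_ne x y
  · rw [M.diagonal, pow_one, titsRefl_mul_self]
  obtain h0 | h0 := eq_or_ne (M x y) 0
  · rw [h0, pow_zero]
  -- `T ^ m - 1 = (∑ k < m, T ^ k) (T - 1)`, and `T - 1` takes values in the plane of `e_x, e_y`
  rw [← sub_eq_zero, ← geom_sum_mul (M.titsRefl x * M.titsRefl y) (M x y)]
  refine LinearMap.ext fun v => ?_
  obtain ⟨a, b, hab⟩ := M.titsRefl_mul_titsRefl_apply_sub x y v
  obtain ⟨hx, hy⟩ := M.geom_sum_titsRefl_mul_titsRefl_apply_single hxy h0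
  rw [Module.End.mul_apply, LinearMap.sub_apply, Module.End.one_apply, hab, map_add, map_smul,
    map_smul, hx, hy, smul_zero, smul_zero, add_zero, LinearMap.zero_apply]

lemma isLiftable_titsRefl : M.IsLiftable M.titsRefl := M.titsRefl_mul_titsRefl_pow

theorem simple_injective : Function.Injective M.simple := by
  intro x y hxy
  by_contra hne
  have hrefl : M.titsRefl x = M.titsRefl y := by
    rw [← M.toCoxeterSystem.lift_apply_simple M.isLiftable_titsRefl x,
      ← M.toCoxeterSystem.lift_apply_simple M.isLiftable_titsRefl y, M.toCoxeterSystem_simple, hxy]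
  have h := congrArg (fun f : Module.End ℂ (B →₀ ℂ) => f (Finsupp.single x 1) x) hrefl
  simp [titsRefl_single, titsCoeff_self, hne] at h

end CoxeterMatrix

section CayleyGraph

variable {M : CoxeterMatrix B}

lemma cayley_adj_mul_simple (v : M.Group) (x : B) : (cayley M).Adj v (v * M.simple x) := by
  refine ⟨fun h => ?_, x, rfl⟩
  have hlen := M.toCoxeterSystem.length_simple x
  rw [M.toCoxeterSystem_simple, left_eq_mul.mp h, M.toCoxeterSystem.length_one] at hlen
  exact zero_ne_one hlen

lemma isLocalAction_localAct {α : Equiv.Perm M.Group} (hα : α ∈ graphAut (cayley M))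
    (v : M.Group) : IsLocalAction M α v (localAct M α v) := by
  intro x
  have hlabel : ∃ y, α (v * M.simple x) = α v * M.simple y :=
    ((hα v (v * M.simple x)).mpr (cayley_adj_mul_simple v x)).2
  rw [localAct, dif_pos hlabel]
  exact hlabel.choose_spec

lemma IsLocalAction.localAct_eq {α : Equiv.Perm M.Group} {v : M.Group} {τ : B → B}
    (hτ : IsLocalAction M α v τ) : localAct M α v = τ := by
  funext x
  have hlabel : ∃ y, α (v * M.simple x) = α v * M.simple y := ⟨τ x, hτ x⟩
  rw [localAct, dif_pos hlabel]
  exact M.simple_injective (mul_left_cancel (hlabel.choose_spec.symm.trans (hτ x)))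

lemma IsLocalAction.mulLeft {α : Equiv.Perm M.Group} {v : M.Group} {τ : B → B}
    (hτ : IsLocalAction M α v τ) (g : M.Group) : IsLocalAction M (Equiv.mulLeft g * α) v τ := by
  intro x
  simp only [Equiv.Perm.mul_apply, Equiv.coe_mulLeft, hτ x, mul_assoc]

lemma eq_of_isLocalAction {α β : Equiv.Perm M.Group} {τ : M.Group → B → B} (h1 : α 1 = β 1)
    (hα : ∀ v, IsLocalAction M α v (τ v)) (hβ : ∀ v, IsLocalAction M β v (τ v)) : α = β := by
  refine Equiv.ext fun w => M.toCoxeterSystem.simple_induction_right (p := fun w => α w = β w) w h1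
    fun v x hv => ?_
  rw [M.toCoxeterSystem_simple, hα v x, hβ v x, hv]

lemma mulLeft_mem_graphAut (g : M.Group) : Equiv.mulLeft g ∈ graphAut (cayley M) := by
  intro v w
  simp only [Equiv.coe_mulLeft, cayley, ne_eq, mul_right_inj, mul_assoc]

end CayleyGraph

noncomputable def fiberEquivOfRangeEqProd {G X Y : Type*} {f : G → X × Y}
    (hf : Function.Injective f) {S : Set Y} (hS : Set.range f = Set.univ ×ˢ S) (x₀ : X) :
    {g // (f g).1 = x₀} ≃ S :=
  Equiv.ofBijective (fun g => ⟨(f g.1).2, (Set.mem_prod.mp (hS ▸ Set.mem_range_self g.1)).2⟩) <| by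
    refine ⟨fun g h hgh => Subtype.ext <| hf <|
      Prod.ext (g.2.trans h.2.symm) (congrArg Subtype.val hgh), ?_⟩
    rintro ⟨y, hy⟩
    obtain ⟨g, hg⟩ : (x₀, y) ∈ Set.range f := hS ▸ ⟨Set.mem_univ x₀, hy⟩
    exact ⟨⟨g, by rw [hg]⟩, Subtype.ext (by simp [hg])⟩

section ConfigMap

variable (M : CoxeterMatrix B)

noncomputable def configMap (α : graphAut (cayley M)) : M.Group × (M.Group → B → B) :=
  ((α : Equiv.Perm M.Group) 1, fun v => localAct M (α : Equiv.Perm M.Group) v)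

lemma configMap_injective : Function.Injective (configMap M) := by
  intro α β h
  obtain ⟨h1, hloc⟩ := Prod.mk.inj h
  exact Subtype.ext (eq_of_isLocalAction h1 (isLocalAction_localAct α.2)
    fun v => by rw [congrFun hloc v]; exact isLocalAction_localAct β.2 v)

lemma range_configMap : Set.range (configMap M) = Set.univ ×ˢ legalFunConfigs M := by
  refine Set.Subset.antisymm ?_ ?_
  · rintro _ ⟨α, rfl⟩
    exact ⟨Set.mem_univ _, α, α.2, isLocalAction_localAct α.2⟩
  · rintro ⟨w, τ⟩ ⟨-, α, hα, hτ⟩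
    refine ⟨⟨Equiv.mulLeft (w * (α 1)⁻¹) * α, mul_mem (mulLeft_mem_graphAut _) hα⟩, ?_⟩
    exact Prod.ext (inv_mul_cancel_right w (α 1)) (funext fun v => ((hτ v).mulLeft _).localAct_eq)

end ConfigMap

theorem aut_bijection_with_configs {B : Type*} (M : CoxeterMatrix B) :
    Function.Injective (fun α : ↥(graphAut (cayley M)) =>
      (((α : Equiv.Perm M.Group)) (1 : M.Group),
        fun v : M.Group => localAct M (α : Equiv.Perm M.Group) v)) ∧
    Set.range (fun α : ↥(graphAut (cayley M)) =>
      (((α : Equiv.Perm M.Group)) (1 : M.Group),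
        fun v : M.Group => localAct M (α : Equiv.Perm M.Group) v)) =
      Set.univ ×ˢ legalFunConfigs M ∧
    Nonempty (↥(MulAction.stabilizer ↥(graphAut (cayley M)) (1 : M.Group)) ≃
      ↥(legalFunConfigs M)) :=
  ⟨configMap_injective M, range_configMap M,
    ⟨fiberEquivOfRangeEqProd (configMap_injective M) (range_configMap M) 1⟩⟩
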